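/- (Parameterization of reversible Markov matrices.) Let G = (V, E) be a finite connected simple graph, D = (V, A) its directed version, and let 𝒮 be a family of proper nonempty subsets of V whose cocycle vectors u(B), B ∈ 𝒮, span (over ℝ) the cocycle space, i.e., the linear span of all cocycle vectors u(B), ∅ ≠ B ⊊ V. Let P be a Markov matrix on V with P(v,w) > 0 if and only if {v,w} ∈ E, for v ≠ w. Then P satisfies detailed balance with respect to some strictly positive function on V if and only if there exist a symmetric function s : V × V → ℝ_{>0} on the edges and positive reals t_B > 0 for B ∈ 𝒮 such that P(v,w) = s(v,w) · Π_{B∈𝒮 : v∈B, w∉B} t_B · Π_{B∈𝒮 : w∈B, v∉B} t_B^{-1} for every arc (v→w) ∈ A; and in that case κ(v) = Π_{B∈𝒮 : v∈B} t_B^{-2} satisfies κ(v)P(v,w) = κ(w)P(w,v) for all v, w, so the invariant probability of P is proportional to κ. -/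

import Mathlib

/-!
Detailed balance with respect to `κ > 0` says `P(v,w) / P(w,v) = κ(w) / κ(v)` on every edge,
that is `P(v,w) = √(P(v,w) P(w,v)) · exp (g v - g w)` with `g = -(log κ) / 2`. The arc function
`g v - g w` is the cocycle `∑ᵥ g(v) u({v})`, so by the spanning hypothesis it equals
`∑_{B ∈ 𝒮} x_B u(B)`; exponentiating gives the monomial form with `t_B = exp x_B`.

Conversely, splitting `∏_{B ∋ v} t_B` into the sets containing both endpoints of an arc and
those containing only `v` shows that `κ(v) = ∏_{B ∋ v} t_B⁻²` makes `κ(v) P(v,w)` symmetric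
in `v, w`; summing detailed balance over `v` then gives invariance of `κ`.
-/

open Finset

/-- The arcs of the directed graph `D = (V, A)` associated to a simple graph `G`. -/
abbrev Arc {V : Type*} (G : SimpleGraph V) : Type _ := {p : V × V // G.Adj p.1 p.2}

/-- The cocycle vector of a subset `B` of vertices: `+1` on arcs exiting `B`, `-1` on arcs
entering `B`, `0` elsewhere. -/
def cocycVec {V : Type*} [DecidableEq V] (G : SimpleGraph V) (B : Finset V)
    (a : Arc G) : ℝ :=
  if (a : V × V).1 ∈ B ∧ (a : V × V).2 ∉ B then 1
  else if (a : V × V).2 ∈ B ∧ (a : V × V).1 ∉ B then -1 else 0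

section Monomial

variable {V : Type*} [DecidableEq V] (𝒮 : Finset (Finset V))

def exitProd {M : Type*} [CommMonoid M] (t : Finset V → M) (v w : V) : M :=
  ∏ B ∈ 𝒮.filter (fun B => v ∈ B ∧ w ∉ B), t B

theorem prod_filter_mem_eq_mul_exitProd {M : Type*} [CommMonoid M] (t : Finset V → M)
    (v w : V) :
    ∏ B ∈ 𝒮.filter (fun B => v ∈ B), t B =
      (∏ B ∈ 𝒮.filter (fun B => v ∈ B ∧ w ∈ B), t B) * exitProd 𝒮 t v w := by
  rw [← prod_filter_mul_prod_filter_not (𝒮.filter (v ∈ ·)) (w ∈ ·), filter_filter,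
    filter_filter]
  rfl

theorem prod_filter_mem_zpow_neg_two_mul_monomial_comm {K : Type*} [Field K]
    (t : Finset V → K) (s : K) (v w : V) :
    (∏ B ∈ 𝒮.filter (fun B => v ∈ B), t B ^ (-2 : ℤ)) *
        (s * exitProd 𝒮 t v w * (exitProd 𝒮 t w v)⁻¹) =
      (∏ B ∈ 𝒮.filter (fun B => w ∈ B), t B ^ (-2 : ℤ)) *
        (s * exitProd 𝒮 t w v * (exitProd 𝒮 t v w)⁻¹) := by
  have hcomm : 𝒮.filter (fun B => w ∈ B ∧ v ∈ B) = 𝒮.filter (fun B => v ∈ B ∧ w ∈ B) :=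
    filter_congr fun _ _ => and_comm
  rw [prod_zpow, prod_zpow, prod_filter_mem_eq_mul_exitProd 𝒮 t v w,
    prod_filter_mem_eq_mul_exitProd 𝒮 t w v, hcomm]
  generalize exitProd 𝒮 t v w = a, exitProd 𝒮 t w v = c
  -- with `0⁻¹ = 0` both sides vanish when `a` or `c` is zero
  rcases eq_or_ne a 0 with rfl | ha
  · simp
  rcases eq_or_ne c 0 with rfl | hc
  · simp
  field_simp

end Monomial

section DetailedBalance

variable {V : Type*}

theorem detailedBalance_of_adj (G : SimpleGraph V) {P : V → V → ℝ} {κ : V → ℝ}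
    (hoff : ∀ v w, v ≠ w → ¬G.Adj v w → P v w = 0)
    (hadj : ∀ v w, G.Adj v w → κ v * P v w = κ w * P w v) (v w : V) :
    κ v * P v w = κ w * P w v := by
  rcases eq_or_ne v w with rfl | hvw
  · rfl
  by_cases h : G.Adj v w
  · exact hadj v w h
  · rw [hoff v w hvw h, hoff w v hvw.symm (mt G.adj_symm h), mul_zero, mul_zero]

theorem sum_mul_eq_of_detailedBalance [Fintype V] {R : Type*} [NonAssocSemiring R]
    {P : V → V → R} {κ : V → R} (hP1 : ∀ v, ∑ w, P v w = 1)
    (hdb : ∀ v w, κ v * P v w = κ w * P w v) (w : V) :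
    ∑ v, κ v * P v w = κ w := by
  simp_rw [hdb _ w, ← mul_sum, hP1, mul_one]

theorem eq_sqrt_mul_mul_sqrt_div_of_mul_eq {p q a b : ℝ} (hp : 0 ≤ p) (hq : 0 ≤ q)
    (ha : 0 < a) (h : a * p = b * q) :
    p = √(p * q) * √(b / a) := by
  calc p = √(p * p) := (Real.sqrt_mul_self hp).symm
    _ = √(p * q * (b / a)) := by
      congr 1
      field_simp
      linear_combination p * h
    _ = √(p * q) * √(b / a) := Real.sqrt_mul (mul_nonneg hp hq) _

end DetailedBalance

section Cocycle

variable {V : Type*} [DecidableEq V] (G : SimpleGraph V)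

theorem cocycVec_apply_eq_sub (B : Finset V) (a : Arc G) :
    cocycVec G B a = (if a.1.1 ∈ B ∧ a.1.2 ∉ B then 1 else 0) -
      (if a.1.2 ∈ B ∧ a.1.1 ∉ B then 1 else 0) := by
  unfold cocycVec
  split_ifs <;> simp_all

theorem cocycVec_univ [Fintype V] : cocycVec G univ = 0 := by
  ext a
  simp [cocycVec]

theorem sum_smul_cocycVec_apply (𝒮 : Finset (Finset V)) (x : Finset V → ℝ) (a : Arc G) :
    (∑ B ∈ 𝒮, x B • cocycVec G B) a =
      ∑ B ∈ 𝒮.filter (fun B => a.1.1 ∈ B ∧ a.1.2 ∉ B), x B -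
        ∑ B ∈ 𝒮.filter (fun B => a.1.2 ∈ B ∧ a.1.1 ∉ B), x B := by
  simp [cocycVec_apply_eq_sub, mul_sub, sum_sub_distrib, sum_filter]

theorem exp_sum_smul_cocycVec_apply (𝒮 : Finset (Finset V)) (x : Finset V → ℝ) (a : Arc G) :
    Real.exp ((∑ B ∈ 𝒮, x B • cocycVec G B) a) =
      exitProd 𝒮 (Real.exp ∘ x) a.1.1 a.1.2 * (exitProd 𝒮 (Real.exp ∘ x) a.1.2 a.1.1)⁻¹ := by
  rw [sum_smul_cocycVec_apply, Real.exp_sub, Real.exp_sum, Real.exp_sum, div_eq_mul_inv]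
  rfl

theorem sum_smul_cocycVec_singleton [Fintype V] (g : V → ℝ) :
    ∑ v, g v • cocycVec G {v} = fun a : Arc G => g a.1.1 - g a.1.2 := by
  ext a
  have hne := G.ne_of_adj a.2
  have hsrc : ∀ v, a.1.1 = v ∧ a.1.2 ≠ v ↔ a.1.1 = v := fun v => by grind
  have htgt : ∀ v, a.1.2 = v ∧ a.1.1 ≠ v ↔ a.1.2 = v := fun v => by grind
  simp [cocycVec_apply_eq_sub, hsrc, htgt, mul_sub, sum_sub_distrib]

theorem grad_mem_span_cocycVec [Fintype V] (g : V → ℝ) :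
    (fun a : Arc G => g a.1.1 - g a.1.2) ∈
      Submodule.span ℝ (cocycVec G '' {B : Finset V | B.Nonempty ∧ B ≠ univ}) := by
  rw [← sum_smul_cocycVec_singleton]
  refine Submodule.sum_mem _ fun v _ => Submodule.smul_mem _ _ ?_
  by_cases hv : ({v} : Finset V) = univ
  · rw [hv, cocycVec_univ]
    exact Submodule.zero_mem _
  · exact Submodule.subset_span ⟨{v}, ⟨singleton_nonempty v, hv⟩, rfl⟩

end Cocycle

theorem detailedBalance_of_monomial {V : Type*} [DecidableEq V] (G : SimpleGraph V)
    (𝒮 : Finset (Finset V)) {P : V → V → ℝ}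
    (hoff : ∀ v w, v ≠ w → ¬G.Adj v w → P v w = 0)
    {s : V → V → ℝ} {t : Finset V → ℝ} (hsym : ∀ v w, s v w = s w v)
    (hpar : ∀ v w, G.Adj v w → P v w = s v w * exitProd 𝒮 t v w * (exitProd 𝒮 t w v)⁻¹) :
    ∀ v w, (∏ B ∈ 𝒮.filter (fun B => v ∈ B), t B ^ (-2 : ℤ)) * P v w =
      (∏ B ∈ 𝒮.filter (fun B => w ∈ B), t B ^ (-2 : ℤ)) * P w v :=
  detailedBalance_of_adj G hoff fun v w h => by
    rw [hpar v w h, hpar w v h.symm, hsym w v]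
    exact prod_filter_mem_zpow_neg_two_mul_monomial_comm 𝒮 t (s v w) v w

theorem exists_exitProd_of_detailedBalance {V : Type*} [Fintype V] [DecidableEq V]
    (G : SimpleGraph V) (𝒮 : Finset (Finset V))
    (hspan : Submodule.span ℝ (cocycVec G '' {B : Finset V | B.Nonempty ∧ B ≠ univ}) ≤
      Submodule.span ℝ (cocycVec G '' (𝒮 : Set (Finset V))))
    {P : V → V → ℝ} (hP0 : ∀ v w, 0 ≤ P v w) {κ : V → ℝ} (hκ : ∀ v, 0 < κ v)
    (hdb : ∀ v w, κ v * P v w = κ w * P w v) :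
    ∃ t : Finset V → ℝ, (∀ B, 0 < t B) ∧ ∀ v w, G.Adj v w →
      P v w = √(P v w * P w v) * exitProd 𝒮 t v w * (exitProd 𝒮 t w v)⁻¹ := by
  set g : V → ℝ := fun v => -Real.log (κ v) / 2
  obtain ⟨x, hx⟩ :=
    (Submodule.mem_span_image_finset_iff_exists_fun' ℝ).1 (hspan (grad_mem_span_cocycVec G g))
  refine ⟨Real.exp ∘ x, fun B => Real.exp_pos _, fun v w h => ?_⟩
  have hexp : exitProd 𝒮 (Real.exp ∘ x) v w * (exitProd 𝒮 (Real.exp ∘ x) w v)⁻¹ =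
      √(κ w / κ v) := by
    calc _ = Real.exp (g v - g w) := by
          rw [← exp_sum_smul_cocycVec_apply G 𝒮 x ⟨(v, w), h⟩, hx]
      _ = √(Real.exp (Real.log (κ w / κ v))) := by
        rw [← Real.exp_half, Real.log_div (hκ w).ne' (hκ v).ne']
        simp only [g]
        ring_nf
      _ = √(κ w / κ v) := by rw [Real.exp_log (div_pos (hκ w) (hκ v))]
  rw [mul_assoc, hexp]
  exact eq_sqrt_mul_mul_sqrt_div_of_mul_eq (hP0 v w) (hP0 w v) (hκ v) (hdb v w)

theorem stmt_18 {V : Type*} [Fintype V] [DecidableEq V]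
    (G : SimpleGraph V)
    (𝒮 : Finset (Finset V))
    (hspan : Submodule.span ℝ (cocycVec G '' (𝒮 : Set (Finset V))) =
      Submodule.span ℝ (cocycVec G '' {B : Finset V | B.Nonempty ∧ B ≠ Finset.univ}))
    (P : V → V → ℝ) (hP0 : ∀ v w, 0 ≤ P v w) (hP1 : ∀ v, (∑ w, P v w) = 1)
    (hsupp : ∀ v w, v ≠ w → (0 < P v w ↔ G.Adj v w)) :
    ((∃ κ : V → ℝ, (∀ v, 0 < κ v) ∧ ∀ v w, κ v * P v w = κ w * P w v) ↔
      (∃ (s : V → V → ℝ) (t : Finset V → ℝ),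
        (∀ v w, s v w = s w v) ∧ (∀ v w, G.Adj v w → 0 < s v w) ∧
        (∀ B ∈ 𝒮, 0 < t B) ∧
        (∀ v w, G.Adj v w → P v w =
          s v w * (∏ B ∈ 𝒮.filter (fun B => v ∈ B ∧ w ∉ B), t B)
            * (∏ B ∈ 𝒮.filter (fun B => w ∈ B ∧ v ∉ B), t B)⁻¹))) ∧
    (∀ (s : V → V → ℝ) (t : Finset V → ℝ),
      (∀ v w, s v w = s w v) → (∀ v w, G.Adj v w → 0 < s v w) →
      (∀ B ∈ 𝒮, 0 < t B) →
      (∀ v w, G.Adj v w → P v w =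
        s v w * (∏ B ∈ 𝒮.filter (fun B => v ∈ B ∧ w ∉ B), t B)
          * (∏ B ∈ 𝒮.filter (fun B => w ∈ B ∧ v ∉ B), t B)⁻¹) →
      (∀ v w, (∏ B ∈ 𝒮.filter (fun B => v ∈ B), (t B) ^ (-2 : ℤ)) * P v w =
        (∏ B ∈ 𝒮.filter (fun B => w ∈ B), (t B) ^ (-2 : ℤ)) * P w v) ∧
      (∀ w, (∑ v, (∏ B ∈ 𝒮.filter (fun B => v ∈ B), (t B) ^ (-2 : ℤ)) * P v w) =
        ∏ B ∈ 𝒮.filter (fun B => w ∈ B), (t B) ^ (-2 : ℤ))) := by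
  have hoff : ∀ v w, v ≠ w → ¬G.Adj v w → P v w = 0 := fun v w hvw h =>
    le_antisymm (not_lt.1 (mt (hsupp v w hvw).1 h)) (hP0 v w)
  have hpos : ∀ v w, G.Adj v w → 0 < P v w := fun v w h => (hsupp v w (G.ne_of_adj h)).2 h
  refine ⟨⟨fun ⟨κ, hκ, hdb⟩ => ?_, fun ⟨s, t, hsym, _, ht, hpar⟩ => ?_⟩,
    fun s t hsym _ _ hpar => ?_⟩
  · obtain ⟨t, ht, hpar⟩ := exists_exitProd_of_detailedBalance G 𝒮 hspan.ge hP0 hκ hdb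
    refine ⟨fun v w => √(P v w * P w v), t, fun v w => by simp only [mul_comm],
      fun v w h => Real.sqrt_pos.2 (mul_pos (hpos v w h) (hpos w v h.symm)),
      fun B _ => ht B, hpar⟩
  · exact ⟨_, fun v => prod_pos fun B hB => zpow_pos (ht B (mem_filter.1 hB).1) _,
      detailedBalance_of_monomial G 𝒮 hoff hsym hpar⟩
  · have hdb := detailedBalance_of_monomial G 𝒮 hoff hsym hpar
    exact ⟨hdb, sum_mul_eq_of_detailedBalance hP1 hdb⟩
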